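/- For θ > 0 and c0 > c1 > 0: (i) J is strictly increasing on (−∞, s_a], with J(s) → −∞ as s → −∞, and maps (−∞, s_a] bijectively onto (−∞, J(s_a)]; (ii) J is strictly decreasing on (0, s_b], with J(s) → +∞ as s → 0⁺, and maps (0, s_b] bijectively onto [J(s_b), +∞); (iii) J is strictly increasing on [s_b, +∞), with J(s) → +∞ as s → +∞, and maps [s_b, +∞) bijectively onto [J(s_b), +∞). -/

import Mathlib

/-- The map `J(s; c0, c1) = (c1*s + c0) * ((s+1)/s)^(1/θ)` for real `s`,
using the real power of the positive quantity `(s+1)/s`. -/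
noncomputable def Jmap (θ c0 c1 s : ℝ) : ℝ :=
  (c1 * s + c0) * ((s + 1) / s) ^ (1 / θ)

/-- `s_a = (1−θ)/(2θ) − (1/(2θ))·√(4θ·(c0/c1) + (1−θ)²)`. -/
noncomputable def sA (θ r : ℝ) : ℝ :=
  (1 - θ) / (2 * θ) - 1 / (2 * θ) * Real.sqrt (4 * θ * r + (1 - θ) ^ 2)

/-- `s_b = (1−θ)/(2θ) + (1/(2θ))·√(4θ·(c0/c1) + (1−θ)²)`. -/
noncomputable def sB (θ r : ℝ) : ℝ :=
  (1 - θ) / (2 * θ) + 1 / (2 * θ) * Real.sqrt (4 * θ * r + (1 - θ) ^ 2)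

/-!
Away from `[-1, 0]`,
`J'(s) = c1 ((s+1)/s)^(1/θ) / (θ s (s+1)) · (θ s² - (1-θ) s - c0/c1)`,
and `s_a`, `s_b` are the roots of this quadratic factor. It is negative at `s = -1` and `s = 0`
because `c0/c1 > 1`, so `s_a < -1 < 0 < s_b`, and the sign of `J'` gives the monotonicity on
the three intervals. The limits of `J` at `-∞`, `0⁺`, `+∞` then turn monotonicity into
bijectivity by the intermediate value theorem.
-/

open Filter Set Topology

section IntermediateValue

variable {α δ : Type*} [ConditionallyCompleteLinearOrder α] [TopologicalSpace α]
  [OrderTopology α] [DenselyOrdered α] [LinearOrder δ] [TopologicalSpace δ]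
  [OrderClosedTopology δ] {f : α → δ}

theorem intermediate_value_Ioc_of_tendsto_nhdsGT {a b : α} (hab : a < b)
    (hf : ContinuousOn f (Ioc a b)) (hlim : Tendsto f (𝓝[>] a) atTop) :
    Ici (f b) ⊆ f '' Ioc a b :=
  haveI := left_nhdsWithin_Ioc_neBot hab
  isPreconnected_Ioc.intermediate_value_Ici (l := 𝓝[Ioc a b] a) (right_mem_Ioc.2 hab)
    inf_le_right hf (hlim.mono_left (nhdsWithin_mono _ Ioc_subset_Ioi_self))

theorem StrictMonoOn.bijOn_Iic {a : α} (hmono : StrictMonoOn f (Iic a))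
    (hf : ContinuousOn f (Iic a)) (hlim : Tendsto f atBot atBot) :
    BijOn f (Iic a) (Iic (f a)) :=
  ⟨fun _ hx ↦ hmono.monotoneOn hx self_mem_Iic hx, hmono.injOn, intermediate_value_Iic hf hlim⟩

theorem StrictMonoOn.bijOn_Ici {a : α} (hmono : StrictMonoOn f (Ici a))
    (hf : ContinuousOn f (Ici a)) (hlim : Tendsto f atTop atTop) :
    BijOn f (Ici a) (Ici (f a)) :=
  ⟨fun _ hx ↦ hmono.monotoneOn self_mem_Ici hx hx, hmono.injOn, intermediate_value_Ici hf hlim⟩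

theorem StrictAntiOn.bijOn_Ioc {a b : α} (hab : a < b) (hanti : StrictAntiOn f (Ioc a b))
    (hf : ContinuousOn f (Ioc a b)) (hlim : Tendsto f (𝓝[>] a) atTop) :
    BijOn f (Ioc a b) (Ici (f b)) :=
  ⟨fun _ hx ↦ hanti.antitoneOn hx (right_mem_Ioc.2 hab) hx.2, hanti.injOn,
    intermediate_value_Ioc_of_tendsto_nhdsGT hab hf hlim⟩

end IntermediateValue

section Roots

variable {θ r s : ℝ}

theorem mul_sub_sA_mul_sub_sB (hθ : θ ≠ 0) (hdisc : 0 ≤ 4 * θ * r + (1 - θ) ^ 2) :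
    θ * (s - sA θ r) * (s - sB θ r) = θ * s ^ 2 - (1 - θ) * s - r := by
  unfold sA sB
  have hsq := Real.sq_sqrt hdisc
  set D := √(4 * θ * r + (1 - θ) ^ 2)
  field_simp
  linear_combination -hsq

theorem sA_le_sB (hθ : 0 < θ) : sA θ r ≤ sB θ r := by
  unfold sA sB
  have : 0 ≤ 1 / (2 * θ) * √(4 * θ * r + (1 - θ) ^ 2) := by positivity
  linarith

theorem quadratic_pos_of_lt_sA (hθ : 0 < θ) (hdisc : 0 ≤ 4 * θ * r + (1 - θ) ^ 2)
    (hs : s < sA θ r) : 0 < θ * s ^ 2 - (1 - θ) * s - r := by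
  rw [← mul_sub_sA_mul_sub_sB hθ.ne' hdisc]
  exact mul_pos_of_neg_of_neg (mul_neg_of_pos_of_neg hθ (sub_neg.2 hs))
    (sub_neg.2 (hs.trans_le (sA_le_sB hθ)))

theorem quadratic_pos_of_sB_lt (hθ : 0 < θ) (hdisc : 0 ≤ 4 * θ * r + (1 - θ) ^ 2)
    (hs : sB θ r < s) : 0 < θ * s ^ 2 - (1 - θ) * s - r := by
  rw [← mul_sub_sA_mul_sub_sB hθ.ne' hdisc]
  exact mul_pos (mul_pos hθ (sub_pos.2 ((sA_le_sB hθ).trans_lt hs))) (sub_pos.2 hs)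

theorem quadratic_neg_of_mem_Ioo (hθ : 0 < θ) (hdisc : 0 ≤ 4 * θ * r + (1 - θ) ^ 2)
    (hs : s ∈ Ioo (sA θ r) (sB θ r)) : θ * s ^ 2 - (1 - θ) * s - r < 0 := by
  rw [← mul_sub_sA_mul_sub_sB hθ.ne' hdisc]
  exact mul_neg_of_pos_of_neg (mul_pos hθ (sub_pos.2 hs.1)) (sub_neg.2 hs.2)

theorem mem_Ioo_of_quadratic_neg (hθ : 0 < θ) (hdisc : 0 ≤ 4 * θ * r + (1 - θ) ^ 2)
    (hs : θ * s ^ 2 - (1 - θ) * s - r < 0) : s ∈ Ioo (sA θ r) (sB θ r) := by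
  rw [← mul_sub_sA_mul_sub_sB hθ.ne' hdisc, mul_assoc] at hs
  rcases mul_neg_iff.1 (neg_of_mul_neg_right hs hθ.le) with ⟨h₁, h₂⟩ | ⟨h₁, h₂⟩
  · exact ⟨sub_pos.1 h₁, sub_neg.1 h₂⟩
  · exact absurd (sA_le_sB hθ) (by linarith)

theorem sA_lt_neg_one (hθ : 0 < θ) (hr : 1 < r) : sA θ r < -1 :=
  (mem_Ioo_of_quadratic_neg hθ (by nlinarith) (by linarith)).1

theorem sB_pos (hθ : 0 < θ) (hr : 0 < r) : 0 < sB θ r :=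
  (mem_Ioo_of_quadratic_neg hθ (by nlinarith) (by linarith)).2

end Roots

section Jmap

variable {θ c0 c1 s : ℝ}

theorem mul_add_one_pos_and_add_one_div_pos (hs : s ∉ Icc (-1) 0) :
    0 < s * (s + 1) ∧ 0 < (s + 1) / s := by
  rcases not_and_or.1 hs with h | h <;> push Not at h
  · exact ⟨mul_pos_of_neg_of_neg (by linarith) (by linarith),
      div_pos_of_neg_of_neg (by linarith) (by linarith)⟩
  · exact ⟨by positivity, by positivity⟩

theorem continuousOn_Jmap : ContinuousOn (Jmap θ c0 c1) (Icc (-1) 0)ᶜ := fun s hs ↦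
  have hs₀ : s ≠ 0 := fun h ↦ hs ⟨by linarith, h.le⟩
  ((continuousAt_const.mul continuousAt_id).add continuousAt_const |>.mul
    (((continuousAt_id.add continuousAt_const).div continuousAt_id hs₀).rpow_const
      (Or.inl (mul_add_one_pos_and_add_one_div_pos hs).2.ne'))).continuousWithinAt

theorem hasDerivAt_Jmap (hθ : θ ≠ 0) (hc1 : c1 ≠ 0) (hs : s ∉ Icc (-1) 0) :
    HasDerivAt (Jmap θ c0 c1) (c1 * ((s + 1) / s) ^ (1 / θ) / (θ * (s * (s + 1))) *
      (θ * s ^ 2 - (1 - θ) * s - c0 / c1)) s := by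
  obtain ⟨hprod, hfrac⟩ := mul_add_one_pos_and_add_one_div_pos hs
  have hs₀ : s ≠ 0 := by rintro rfl; simp at hprod
  have hs₁ : s + 1 ≠ 0 := by rintro h; simp [h] at hprod
  have h := (((hasDerivAt_id s).const_mul c1).add_const c0).mul
    ((((hasDerivAt_id s).add_const 1).div (hasDerivAt_id s) hs₀).rpow_const (p := 1 / θ)
      (Or.inl hfrac.ne'))
  refine h.congr_deriv ?_
  simp only [id, Pi.div_apply, Real.rpow_sub hfrac, Real.rpow_one]
  field_simp
  ring

theorem strictMonoOn_Jmap (hθ : 0 < θ) (hc1 : 0 < c1) {D : Set ℝ} (hD : Convex ℝ D)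
    (hDJ : D ⊆ (Icc (-1) 0)ᶜ) (hq : ∀ s ∈ interior D, 0 < θ * s ^ 2 - (1 - θ) * s - c0 / c1) :
    StrictMonoOn (Jmap θ c0 c1) D :=
  strictMonoOn_of_hasDerivWithinAt_pos hD (continuousOn_Jmap.mono hDJ)
    (fun s hs ↦ (hasDerivAt_Jmap hθ.ne' hc1.ne' (hDJ (interior_subset hs))).hasDerivWithinAt)
    fun s hs ↦ by
      obtain ⟨_, _⟩ := mul_add_one_pos_and_add_one_div_pos (hDJ (interior_subset hs))
      exact mul_pos (by positivity) (hq s hs)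

theorem strictAntiOn_Jmap (hθ : 0 < θ) (hc1 : 0 < c1) {D : Set ℝ} (hD : Convex ℝ D)
    (hDJ : D ⊆ (Icc (-1) 0)ᶜ) (hq : ∀ s ∈ interior D, θ * s ^ 2 - (1 - θ) * s - c0 / c1 < 0) :
    StrictAntiOn (Jmap θ c0 c1) D :=
  strictAntiOn_of_hasDerivWithinAt_neg hD (continuousOn_Jmap.mono hDJ)
    (fun s hs ↦ (hasDerivAt_Jmap hθ.ne' hc1.ne' (hDJ (interior_subset hs))).hasDerivWithinAt)
    fun s hs ↦ by
      obtain ⟨_, _⟩ := mul_add_one_pos_and_add_one_div_pos (hDJ (interior_subset hs))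
      exact mul_neg_of_pos_of_neg (by positivity) (hq s hs)

theorem tendsto_add_one_div_self_rpow {l : Filter ℝ} (hl : Tendsto (·⁻¹) l (𝓝 0))
    (hl₀ : ∀ᶠ s in l, s ≠ 0) (p : ℝ) : Tendsto (fun s ↦ ((s + 1) / s) ^ p) l (𝓝 1) := by
  have h : Tendsto (fun s ↦ 1 + s⁻¹) l (𝓝 1) := by
    simpa using (tendsto_const_nhds (x := (1 : ℝ))).add hl
  have hfrac : Tendsto (fun s ↦ (s + 1) / s) l (𝓝 1) :=
    h.congr' (hl₀.mono fun s hs ↦ by field_simp)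
  simpa using hfrac.rpow_const (Or.inl one_ne_zero)

theorem tendsto_Jmap_atBot (hc1 : 0 < c1) : Tendsto (Jmap θ c0 c1) atBot atBot :=
  Tendsto.atBot_mul_pos one_pos
    (tendsto_atBot_add_const_right _ c0 ((tendsto_const_mul_atBot_of_pos hc1).2 tendsto_id))
    (tendsto_add_one_div_self_rpow tendsto_inv_atBot_zero (eventually_ne_atBot 0) _)

theorem tendsto_Jmap_atTop (hc1 : 0 < c1) : Tendsto (Jmap θ c0 c1) atTop atTop :=
  Tendsto.atTop_mul_pos one_pos
    (tendsto_atTop_add_const_right _ c0 ((tendsto_const_mul_atTop_of_pos hc1).2 tendsto_id))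
    (tendsto_add_one_div_self_rpow tendsto_inv_atTop_zero (eventually_ne_atTop 0) _)

theorem tendsto_Jmap_nhdsGT_zero (hθ : 0 < θ) (hc0 : 0 < c0) :
    Tendsto (Jmap θ c0 c1) (𝓝[>] 0) atTop := by
  have hfrac : Tendsto (fun s : ℝ ↦ (s + 1) / s) (𝓝[>] 0) atTop :=
    (tendsto_atTop_add_const_left _ 1 tendsto_inv_nhdsGT_zero).congr'
      (eventually_mem_nhdsWithin.mono fun s (hs : 0 < s) ↦ by field_simp)
  have hlin : Tendsto (fun s : ℝ ↦ c1 * s + c0) (𝓝[>] 0) (𝓝 c0) :=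
    tendsto_nhdsWithin_of_tendsto_nhds <| by
      simpa using (continuous_const_mul c1).add_const c0 |>.tendsto 0
  exact hlin.pos_mul_atTop hc0 ((tendsto_rpow_atTop (by positivity)).comp hfrac)

end Jmap

/-- For `θ > 0` and `c0 > c1 > 0`:
(i) `J` is strictly increasing on `(−∞, s_a]`, tends to `−∞` at `−∞`, and maps
`(−∞, s_a]` bijectively onto `(−∞, J(s_a)]`;
(ii) `J` is strictly decreasing on `(0, s_b]`, tends to `+∞` as `s → 0⁺`, and maps
`(0, s_b]` bijectively onto `[J(s_b), +∞)`;
(iii) `J` is strictly increasing on `[s_b, +∞)`, tends to `+∞` at `+∞`, and maps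
`[s_b, +∞)` bijectively onto `[J(s_b), +∞)`. -/
theorem stmt6 (θ c0 c1 : ℝ) (hθ : 0 < θ) (hc1 : 0 < c1) (hc01 : c1 < c0) :
    (StrictMonoOn (Jmap θ c0 c1) (Set.Iic (sA θ (c0 / c1))) ∧
      Filter.Tendsto (Jmap θ c0 c1) Filter.atBot Filter.atBot ∧
      Set.BijOn (Jmap θ c0 c1) (Set.Iic (sA θ (c0 / c1)))
        (Set.Iic (Jmap θ c0 c1 (sA θ (c0 / c1))))) ∧
    (StrictAntiOn (Jmap θ c0 c1) (Set.Ioc 0 (sB θ (c0 / c1))) ∧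
      Filter.Tendsto (Jmap θ c0 c1) (nhdsWithin 0 (Set.Ioi 0)) Filter.atTop ∧
      Set.BijOn (Jmap θ c0 c1) (Set.Ioc 0 (sB θ (c0 / c1)))
        (Set.Ici (Jmap θ c0 c1 (sB θ (c0 / c1))))) ∧
    (StrictMonoOn (Jmap θ c0 c1) (Set.Ici (sB θ (c0 / c1))) ∧
      Filter.Tendsto (Jmap θ c0 c1) Filter.atTop Filter.atTop ∧
      Set.BijOn (Jmap θ c0 c1) (Set.Ici (sB θ (c0 / c1)))
        (Set.Ici (Jmap θ c0 c1 (sB θ (c0 / c1))))) := by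
  have hc0 : 0 < c0 := hc1.trans hc01
  have hr : 1 < c0 / c1 := (one_lt_div hc1).2 hc01
  have hdisc : 0 ≤ 4 * θ * (c0 / c1) + (1 - θ) ^ 2 := by nlinarith
  have hsA := sA_lt_neg_one hθ hr
  have hsB := sB_pos hθ (zero_lt_one.trans hr)
  have hI : Iic (sA θ (c0 / c1)) ⊆ (Icc (-1) 0)ᶜ := fun s hs h ↦ by linarith [h.1, mem_Iic.1 hs]
  have hII : Ioc 0 (sB θ (c0 / c1)) ⊆ (Icc (-1) 0)ᶜ := fun s hs h ↦ by linarith [h.2, hs.1]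
  have hIII : Ici (sB θ (c0 / c1)) ⊆ (Icc (-1) 0)ᶜ := fun s hs h ↦ by linarith [h.2, mem_Ici.1 hs]
  have hmonoI := strictMonoOn_Jmap hθ hc1 (convex_Iic _) hI fun s hs ↦
    quadratic_pos_of_lt_sA hθ hdisc (by simpa using hs)
  have hantiII := strictAntiOn_Jmap hθ hc1 (convex_Ioc _ _) hII fun s hs ↦ by
    rw [interior_Ioc] at hs
    exact quadratic_neg_of_mem_Ioo hθ hdisc ⟨by linarith [hs.1], hs.2⟩
  have hmonoIII := strictMonoOn_Jmap hθ hc1 (convex_Ici _) hIII fun s hs ↦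
    quadratic_pos_of_sB_lt hθ hdisc (by simpa using hs)
  exact ⟨⟨hmonoI, tendsto_Jmap_atBot hc1,
      hmonoI.bijOn_Iic (continuousOn_Jmap.mono hI) (tendsto_Jmap_atBot hc1)⟩,
    ⟨hantiII, tendsto_Jmap_nhdsGT_zero hθ hc0,
      hantiII.bijOn_Ioc hsB (continuousOn_Jmap.mono hII) (tendsto_Jmap_nhdsGT_zero hθ hc0)⟩,
    ⟨hmonoIII, tendsto_Jmap_atTop hc1,
      hmonoIII.bijOn_Ici (continuousOn_Jmap.mono hIII) (tendsto_Jmap_atTop hc1)⟩⟩
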